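/- Let G be a group, k a field, and A^{ext} = ⊕_{g∈G} A^{ext}_g a G-graded k-algebra with A = A^{ext}_e. The map β : A^{ext} ⊗_A A^{ext} → A^{ext} ⊗ kG defined by β(a ⊗ b) = Σ_g a·b_g ⊗ g (where b = Σ b_g is the decomposition into homogeneous components) is bijective if and only if A^{ext} is strongly graded, i.e., A^{ext}_g · A^{ext}_h = A^{ext}_{gh} for all g, h ∈ G. -/

import Mathlib

/-! Strong grading amounts to `1 ∈ 𝒜 (-g) * 𝒜 g` for every `g`. Reading `R ⊗ kG` as `G →₀ R`,
the `g`-th coordinate of `β (x ⊗ y)` is `x * y_g`, whose degree-zero part `x_{-g} * y_g` lies in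
`𝒜 (-g) * 𝒜 g`; so if `β` hits `1 ⊗ g`, then `1 ∈ 𝒜 (-g) * 𝒜 g`. Conversely, writing
`1 = ∑ vᵢ * uᵢ` with `vᵢ ∈ 𝒜 (-g)` and `uᵢ ∈ 𝒜 g`, the map `x ⊗ g ↦ ∑ x vᵢ ⊗ uᵢ` inverts `β`:
for `b` of degree `g` the elements `b vᵢ` have degree zero, so they pass across the tensor sign and
`∑ x b vᵢ ⊗ uᵢ = x ⊗ b`. -/

open TensorProduct

section StronglyGraded

variable {k R G : Type*} [CommSemiring k] [Semiring R] [Algebra k R] [AddGroup G]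

def IsStronglyGraded (𝒜 : G → Submodule k R) : Prop :=
  ∀ g h : G, 𝒜 g * 𝒜 h = 𝒜 (g + h)

theorem isStronglyGraded_iff_one_mem_neg_mul (𝒜 : G → Submodule k R) [SetLike.GradedMonoid 𝒜] :
    IsStronglyGraded 𝒜 ↔ ∀ g, (1 : R) ∈ 𝒜 (-g) * 𝒜 g := by
  refine ⟨fun hs g => by simpa [hs (-g) g] using SetLike.one_mem_graded 𝒜, fun h1 g h => ?_⟩
  refine le_antisymm (Submodule.mul_le.2 fun a ha b hb => SetLike.mul_mem_graded ha hb)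
    fun x hx => ?_
  have hmul : ∀ c ∈ 𝒜 (-h) * 𝒜 h, x * c ∈ 𝒜 g * 𝒜 h := fun c hc =>
    Submodule.mul_induction_on hc
      (fun a ha b hb => mul_assoc x a b ▸ Submodule.mul_mem_mul
        (by simpa using SetLike.mul_mem_graded hx ha) hb)
      (fun _ _ => by rw [mul_add]; exact add_mem)
  simpa using hmul 1 (h1 h)

end StronglyGraded

theorem Submodule.exists_finset_sum_mul_eq_of_mem_mul {k R : Type*} [CommSemiring k] [Semiring R]
    [Algebra k R] {M N : Submodule k R} {c : R} (hc : c ∈ M * N) :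
    ∃ S : Finset (M × N), ∑ p ∈ S, (p.1 : R) * p.2 = c := by
  rw [← Submodule.mulMap_range] at hc
  obtain ⟨t, rfl⟩ := hc
  obtain ⟨S, rfl⟩ := TensorProduct.exists_finset t
  exact ⟨S, by simp [map_sum]⟩

section TensorMonoidAlgebra

variable (k R G : Type*) [CommSemiring k] [AddCommMonoid R] [Module k R] [DecidableEq G]

noncomputable def tensorMonoidAlgebraEquiv :
    R ⊗[k] MonoidAlgebra k (Multiplicative G) ≃ₗ[k] (G →₀ R) :=
  LinearEquiv.lTensor R (MonoidAlgebra.coeffLinearEquiv k) ≪≫ₗ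
    finsuppScalarRight k k R (Multiplicative G) ≪≫ₗ Finsupp.domLCongr Multiplicative.toAdd

@[simp]
theorem tensorMonoidAlgebraEquiv_tmul_single (x : R) (g : G) (c : k) :
    tensorMonoidAlgebraEquiv k R G (x ⊗ₜ MonoidAlgebra.single (Multiplicative.ofAdd g) c) =
      Finsupp.single g (c • x) := by
  ext h
  simp [tensorMonoidAlgebraEquiv, MonoidAlgebra.coeff_single, Finsupp.single_apply]

end TensorMonoidAlgebra

section GaloisMap

open DirectSum

variable {k R G : Type*} [CommRing k] [Ring R] [Algebra k R] [AddGroup G]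
  (𝒜 : G → Submodule k R) (N : Submodule k (R ⊗[k] R))

def IsGaloisMap (β : (R ⊗[k] R) ⧸ N →ₗ[k] (G →₀ R)) : Prop :=
  ∀ (x b : R) (j : G), b ∈ 𝒜 j →
    β (Submodule.Quotient.mk (x ⊗ₜ b)) = Finsupp.single j (x * b)

noncomputable def galoisInverse (S : ∀ g : G, Finset (𝒜 (-g) × 𝒜 g)) :
    (G →₀ R) →ₗ[k] (R ⊗[k] R) ⧸ N :=
  Finsupp.lsum k fun g => ∑ p ∈ S g,
    N.mkQ ∘ₗ (TensorProduct.mk k R R).flip p.2 ∘ₗ LinearMap.mulRight k (p.1 : R)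

variable {𝒜 N} {β : (R ⊗[k] R) ⧸ N →ₗ[k] (G →₀ R)} {S : ∀ g : G, Finset (𝒜 (-g) × 𝒜 g)}

theorem galoisInverse_single (g : G) (x : R) :
    galoisInverse 𝒜 N S (Finsupp.single g x) =
      ∑ p ∈ S g, Submodule.Quotient.mk ((x * p.1) ⊗ₜ (p.2 : R)) := by
  simp [galoisInverse]

theorem IsGaloisMap.apply_galoisInverse (hβ : IsGaloisMap 𝒜 N β)
    (hS : ∀ g, ∑ p ∈ S g, (p.1 : R) * p.2 = 1) (f : G →₀ R) :
    β (galoisInverse 𝒜 N S f) = f := by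
  suffices β ∘ₗ galoisInverse 𝒜 N S = LinearMap.id from LinearMap.congr_fun this f
  refine Finsupp.lhom_ext fun g x => ?_
  have hterm (p : 𝒜 (-g) × 𝒜 g) : β (Submodule.Quotient.mk ((x * p.1) ⊗ₜ (p.2 : R))) =
      Finsupp.single g (x * (p.1 * p.2)) := by
    rw [hβ _ _ g p.2.2, mul_assoc]
  rw [LinearMap.comp_apply, galoisInverse_single, map_sum, Finset.sum_congr rfl fun p _ => hterm p,
    ← Finsupp.single_finsetSum, ← Finset.mul_sum, hS, mul_one, LinearMap.id_apply]

theorem galoisInverse_single_mul_of_mem [SetLike.GradedMonoid 𝒜]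
    (hN : ∀ x y a : R, a ∈ 𝒜 0 → (x * a) ⊗ₜ[k] y - x ⊗ₜ[k] (a * y) ∈ N)
    (hS : ∀ g, ∑ p ∈ S g, (p.1 : R) * p.2 = 1) {x b : R} {j : G} (hb : b ∈ 𝒜 j) :
    galoisInverse 𝒜 N S (Finsupp.single j (x * b)) = Submodule.Quotient.mk (x ⊗ₜ b) := by
  have hdeg (p : 𝒜 (-j) × 𝒜 j) : b * p.1 ∈ 𝒜 0 := by
    simpa using SetLike.mul_mem_graded hb p.1.2
  calc galoisInverse 𝒜 N S (Finsupp.single j (x * b))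
      = ∑ p ∈ S j, Submodule.Quotient.mk (x ⊗ₜ (b * p.1 * p.2)) := by
        rw [galoisInverse_single]
        refine Finset.sum_congr rfl fun p _ => (Submodule.Quotient.eq N).2 ?_
        simpa [mul_assoc] using hN x p.2 _ (hdeg p)
    _ = Submodule.Quotient.mk (x ⊗ₜ (b * ∑ p ∈ S j, (p.1 : R) * p.2)) := by
        simp only [Finset.mul_sum, tmul_sum, ← Submodule.mkQ_apply, map_sum, mul_assoc]
    _ = Submodule.Quotient.mk (x ⊗ₜ b) := by rw [hS, mul_one]

variable [DecidableEq G] [GradedRing 𝒜]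

theorem IsGaloisMap.apply_mk_tmul (hβ : IsGaloisMap 𝒜 N β) (x y : R) (g : G) :
    β (Submodule.Quotient.mk (x ⊗ₜ y)) g = x * decompose 𝒜 y g := by
  induction y using DirectSum.Decomposition.inductionOn 𝒜 with
  | zero => simp
  | @homogeneous j b =>
    rw [hβ x b j b.2, Finsupp.single_apply]
    split_ifs with hj
    · rw [DirectSum.decompose_of_mem_same 𝒜 (hj ▸ b.2)]
    · rw [DirectSum.decompose_of_mem_ne 𝒜 b.2 hj, mul_zero]
  | add y y' hy hy' => simp [tmul_add, hy, hy', mul_add]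

theorem IsGaloisMap.decompose_apply_zero_mem (hβ : IsGaloisMap 𝒜 N β) (w : (R ⊗[k] R) ⧸ N)
    (g : G) : (decompose 𝒜 (β w g) 0 : R) ∈ 𝒜 (-g) * 𝒜 g := by
  obtain ⟨w, rfl⟩ := N.mkQ_surjective w
  induction w using TensorProduct.induction_on with
  | zero => simp
  | tmul x y =>
    have hdeg := coe_decompose_mul_add_of_right_mem 𝒜 (i := -g) (a := x)
      (decompose 𝒜 y g).2
    rw [neg_add_cancel] at hdeg
    rw [Submodule.mkQ_apply, hβ.apply_mk_tmul, hdeg]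
    exact Submodule.mul_mem_mul (SetLike.coe_mem _) (SetLike.coe_mem _)
  | add w w' hw hw' => simpa using add_mem hw hw'

theorem IsGaloisMap.one_mem_neg_mul_of_surjective (hβ : IsGaloisMap 𝒜 N β)
    (hsurj : Function.Surjective β) (g : G) : (1 : R) ∈ 𝒜 (-g) * 𝒜 g := by
  obtain ⟨w, hw⟩ := hsurj (Finsupp.single g 1)
  have h := hβ.decompose_apply_zero_mem w g
  rwa [hw, Finsupp.single_eq_same, decompose_of_mem_same 𝒜 (SetLike.one_mem_graded 𝒜)] at h

theorem IsGaloisMap.galoisInverse_apply (hβ : IsGaloisMap 𝒜 N β)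
    (hN : ∀ x y a : R, a ∈ 𝒜 0 → (x * a) ⊗ₜ[k] y - x ⊗ₜ[k] (a * y) ∈ N)
    (hS : ∀ g, ∑ p ∈ S g, (p.1 : R) * p.2 = 1) (w : (R ⊗[k] R) ⧸ N) :
    galoisInverse 𝒜 N S (β w) = w := by
  suffices galoisInverse 𝒜 N S ∘ₗ β = LinearMap.id from LinearMap.congr_fun this w
  refine Submodule.linearMap_qext _ (TensorProduct.ext' fun x y => ?_)
  induction y using DirectSum.Decomposition.inductionOn 𝒜 with
  | zero => simp
  | homogeneous b =>
    simp only [LinearMap.comp_apply, Submodule.mkQ_apply, LinearMap.id_apply]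
    rw [hβ x b _ b.2, galoisInverse_single_mul_of_mem hN hS b.2]
  | add y y' hy hy' => simp_all [tmul_add]

theorem IsGaloisMap.bijective_iff (hβ : IsGaloisMap 𝒜 N β)
    (hN : ∀ x y a : R, a ∈ 𝒜 0 → (x * a) ⊗ₜ[k] y - x ⊗ₜ[k] (a * y) ∈ N) :
    Function.Bijective β ↔ IsStronglyGraded 𝒜 := by
  rw [isStronglyGraded_iff_one_mem_neg_mul]
  refine ⟨fun h => hβ.one_mem_neg_mul_of_surjective h.2, fun h => ?_⟩
  choose S hS using fun g => Submodule.exists_finset_sum_mul_eq_of_mem_mul (h g)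
  exact Function.bijective_iff_has_inverse.2
    ⟨galoisInverse 𝒜 N S, hβ.galoisInverse_apply hN hS, hβ.apply_galoisInverse hS⟩

end GaloisMap

/-- Let `A^ext = ⊕_g A^ext_g` be a `G`-graded `k`-algebra with identity
component `A = A^ext_e`. The canonical map `β : A^ext ⊗_A A^ext → A^ext ⊗ kG`,
`β(a ⊗ b) = Σ_g a·b_g ⊗ g`, is bijective if and only if `A^ext` is strongly graded,
i.e. `A^ext_g · A^ext_h = A^ext_{gh}` for all `g, h`. (The grading group is written
additively; `A^ext ⊗_A A^ext` is realized as the quotient of `A^ext ⊗_k A^ext` by the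
relations `xa ⊗ y = x ⊗ ay`, `a ∈ A`.) -/
theorem stmt4 {k : Type*} [CommRing k] {G : Type*} [AddGroup G] [DecidableEq G]
    {R : Type*} [Ring R] [Algebra k R]
    (𝒜 : G → Submodule k R) [GradedRing 𝒜]
    [∀ (i : G) (x : ↥(𝒜 i)), Decidable (x ≠ 0)]
    -- the submodule of `A^ext ⊗_k A^ext` implementing the tensor product over `A = 𝒜 0`
    (N : Submodule k (R ⊗[k] R))
    (hN : N = Submodule.span k {z : R ⊗[k] R |
      ∃ x y a : R, a ∈ 𝒜 0 ∧ z = (x * a) ⊗ₜ y - x ⊗ₜ (a * y)})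
    -- the canonical map β on `A^ext ⊗_A A^ext`
    (βbar : (R ⊗[k] R) ⧸ N →ₗ[k] R ⊗[k] MonoidAlgebra k (Multiplicative G))
    (hβ : ∀ x y : R, βbar (Submodule.Quotient.mk (x ⊗ₜ y)) =
      (DirectSum.decompose 𝒜 y).sum fun g yg =>
        (x * (yg : R)) ⊗ₜ MonoidAlgebra.single (Multiplicative.ofAdd g) (1 : k)) :
    Function.Bijective βbar ↔ ∀ g h : G, 𝒜 g * 𝒜 h = 𝒜 (g + h) := by
  let e := tensorMonoidAlgebraEquiv k R G
  have hgalois : IsGaloisMap 𝒜 N (e.toLinearMap ∘ₗ βbar) := fun x b j hb => by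
    rw [LinearMap.comp_apply, hβ, DirectSum.decompose_of_mem 𝒜 hb, DirectSum.of,
      DFinsupp.singleAddHom_apply, DFinsupp.sum_single_index (by simp)]
    simp [e]
  have hrel : ∀ x y a : R, a ∈ 𝒜 0 → (x * a) ⊗ₜ[k] y - x ⊗ₜ[k] (a * y) ∈ N :=
    fun x y a ha => hN ▸ Submodule.subset_span ⟨x, y, a, ha, rfl⟩
  rw [← e.bijective.of_comp_iff' βbar]
  exact hgalois.bijective_iff hrel
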